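/- Let ζ be as above with B = ∂_{M̄} ζ and A = ((∇ζ)⁻¹)ᵀ. Then B · ∇_A B = (M̄ · ∇)² η, where η := ζ − id and (M̄·∇)² denotes applying the directional derivative M̄·∇ twice. -/

import Mathlib

/-!
Since `A = ((∇ζ)⁻¹)ᵀ`, the weights `Σ_j B_j A_{jk}` are the entries of `(∇ζ)⁻¹ (∇ζ M̄) = M̄`, so
`B · ∇_A B = (M̄·∇) B = (M̄·∇)² ζ`; and `(M̄·∇)² ζ = (M̄·∇)² η` because `(M̄·∇) id = M̄` is constant.
-/

/-- The Jacobian matrix (∂_j ζ_i) of ζ : ℝ³ → ℝ³. -/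
noncomputable def jac (ζ : (Fin 3 → ℝ) → Fin 3 → ℝ) (x : Fin 3 → ℝ) :
    Matrix (Fin 3) (Fin 3) ℝ :=
  fun i j => fderiv ℝ (fun y => ζ y i) x (Pi.single j 1)

open Matrix

theorem LinearMapClass.apply_eq_sum_mul_single {ι R F : Type*} [Fintype ι] [DecidableEq ι]
    [CommSemiring R] [FunLike F (ι → R) R] [LinearMapClass F R (ι → R) R] (L : F) (v : ι → R) :
    L v = ∑ k, v k * L (Pi.single k 1) := by
  conv_lhs => rw [pi_eq_sum_univ' v, map_sum]
  simp only [map_smul, smul_eq_mul]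

theorem Matrix.vecMul_mulVec_inv_transpose {n K : Type*} [Fintype n] [DecidableEq n] [Field K]
    {A : Matrix n n K} (hA : IsUnit A.det) (v : n → K) : (A *ᵥ v) ᵥ* A⁻¹ᵀ = v := by
  rw [vecMul_transpose, mulVec_mulVec, nonsing_inv_mul A hA, one_mulVec]

theorem Matrix.sum_sum_mulVec_mul_inv_transpose_mul {n K : Type*} [Fintype n] [DecidableEq n]
    [Field K] {A : Matrix n n K} (hA : IsUnit A.det) (v c : n → K) :
    ∑ j, ∑ k, (A *ᵥ v) j * A⁻¹ᵀ j k * c k = v ⬝ᵥ c := by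
  calc ∑ j, ∑ k, (A *ᵥ v) j * A⁻¹ᵀ j k * c k
      = ∑ k, ((A *ᵥ v) ᵥ* A⁻¹ᵀ) k * c k := by
        rw [Finset.sum_comm]
        simp only [vecMul, dotProduct, Finset.sum_mul]
    _ = v ⬝ᵥ c := by rw [vecMul_mulVec_inv_transpose hA]; rfl

theorem fderiv_sub_eval_apply {ι 𝕜 : Type*} [Fintype ι] [NontriviallyNormedField 𝕜]
    {f : (ι → 𝕜) → 𝕜} {z : ι → 𝕜} (hf : DifferentiableAt 𝕜 f z) (i : ι) (v : ι → 𝕜) :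
    fderiv 𝕜 (fun w => f w - w i) z v = fderiv 𝕜 f z v - v i := by
  have hproj : fderiv 𝕜 (fun w : ι → 𝕜 => w i) z = ContinuousLinearMap.proj i :=
    (ContinuousLinearMap.proj (R := 𝕜) (φ := fun _ : ι => 𝕜) i).fderiv
  rw [fderiv_fun_sub hf (differentiableAt_apply i z), hproj]
  rfl

theorem jac_mulVec_apply (ζ : (Fin 3 → ℝ) → Fin 3 → ℝ) (z v : Fin 3 → ℝ) (i : Fin 3) :
    (jac ζ z *ᵥ v) i = fderiv ℝ (fun y => ζ y i) z v := by
  rw [LinearMapClass.apply_eq_sum_mul_single (fderiv ℝ (fun y => ζ y i) z) v]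
  simp only [jac, mulVec, dotProduct, mul_comm]

/-- With B = ∂_{M̄}ζ = ∇ζ M̄ and A = ((∇ζ)⁻¹)ᵀ for a C² map ζ with det ∇ζ = 1:
B·∇_A B = (M̄·∇)² η, where η := ζ − id. -/
theorem B_gradA_B_eq_second_directional
    (ζ : (Fin 3 → ℝ) → Fin 3 → ℝ) (Mb : Fin 3 → ℝ)
    (hζ : ContDiff ℝ 2 ζ) (hdet : ∀ y, (jac ζ y).det = 1) :
    ∀ (y : Fin 3 → ℝ) (i : Fin 3),
      (∑ j : Fin 3, ∑ k : Fin 3, (jac ζ y).mulVec Mb j * ((jac ζ y)⁻¹).transpose j k *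
          fderiv ℝ (fun z => (jac ζ z).mulVec Mb i) y (Pi.single k 1))
        = fderiv ℝ (fun z => fderiv ℝ (fun w => ζ w i - w i) z Mb) y Mb := by
  intro y i
  have hζi : Differentiable ℝ (fun w => ζ w i) :=
    differentiable_pi.mp (hζ.differentiable two_ne_zero) i
  have hunit : IsUnit (jac ζ y).det := by rw [hdet]; exact isUnit_one
  calc _ = ∑ k, Mb k * fderiv ℝ (fun z => (jac ζ z *ᵥ Mb) i) y (Pi.single k 1) :=
        sum_sum_mulVec_mul_inv_transpose_mul hunit _ _
    _ = fderiv ℝ (fun z => fderiv ℝ (fun w => ζ w i) z Mb) y Mb := by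
        simp only [jac_mulVec_apply, ← LinearMapClass.apply_eq_sum_mul_single]
    _ = _ := by
        simp only [fderiv_sub_eval_apply (hζi _), fderiv_sub_const]
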